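/- Let S = (⟨N, L⟩, loc, Supp) be a structuring of (Σ, Ax, Lem) and suppose K →*σ N holds in ⟨N, L⟩ for nodes K, N. Then the transitive enrichment S' = (⟨N, L ∪ {K →σ N}⟩, loc, Supp) is again a structuring of (Σ, Ax, Lem). -/

import Mathlib

open Classical

/-! # Development graphs and structurings

Entities come from a fixed type `E`, partitioned into signature symbols, axioms and
lemmas by a kind function `kind : E → EKind`.  A development graph is a finite acyclic
directed graph whose nodes are triples of sets of entities (local signature, local
axioms, local lemmas) and whose links are global definition links labelled with
signature morphisms `σ : E → E`. -/

/-- The three kinds of entities: signature symbols, axioms and lemmas. -/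
inductive EKind : Type
  | sig
  | ax
  | lem
deriving DecidableEq

/-- A development graph node `N = (sig^N, ax^N, lem^N)`. -/
structure DGNode (E : Type*) where
  sig : Set E
  ax : Set E
  lem : Set E

/-- The local domain `dom^N := sig^N ∪ ax^N ∪ lem^N`. -/
def DGNode.localDom {E : Type*} (N : DGNode E) : Set E := N.sig ∪ N.ax ∪ N.lem

/-- A global definition link `src →mor tgt`. -/
structure DGLink (E : Type*) where
  src : DGNode E
  mor : E → E
  tgt : DGNode E

/-- A development graph: a finite acyclic directed graph of nodes and links. -/
structure DevGraph (E : Type*) where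
  nodes : Set (DGNode E)
  links : Set (DGLink E)
  src_mem : ∀ l ∈ links, l.src ∈ nodes
  tgt_mem : ∀ l ∈ links, l.tgt ∈ nodes
  finite_nodes : nodes.Finite
  finite_links : links.Finite
  acyclic : ∀ N, ¬ Relation.TransGen (fun M K => ∃ l ∈ links, l.src = M ∧ l.tgt = K) N N

namespace DevGraph

variable {E : Type*}

/-- `e ∈ Dom_D(N)`: the domain of a node is the union of its local domain with the
images `σ(Dom_D(M))` over all incoming links `M →σ N`. -/
inductive InDom (D : DevGraph E) : DGNode E → E → Prop
  | loc {N : DGNode E} {e : E} : N ∈ D.nodes → e ∈ N.localDom → InDom D N e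
  | link {l : DGLink E} {e : E} : l ∈ D.links → InDom D l.src e → InDom D l.tgt (l.mor e)

/-- `Dom_D(N)`. -/
def Dom (D : DevGraph E) (N : DGNode E) : Set E := {e | D.InDom N e}

/-- `Dom_D`: the union of `Dom_D(N)` over all nodes. -/
def DomAll (D : DevGraph E) : Set E := ⋃ N ∈ D.nodes, D.Dom N

/-- Root nodes: nodes without outgoing links. -/
def IsRoot (D : DevGraph E) (N : DGNode E) : Prop :=
  N ∈ D.nodes ∧ ∀ l ∈ D.links, l.src ≠ N

/-- `Dom_{Roots(D)}`. -/
def DomRoots (D : DevGraph E) : Set E := {e | ∃ N, D.IsRoot N ∧ e ∈ D.Dom N}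

/-- Global reachability `M →*σ N`: either `M = N` and `σ = id`, or there is a link
`M →σ' K` and `K →*σ'' N` with `σ = σ'' ∘ σ'`. -/
inductive Reaches (D : DevGraph E) : DGNode E → (E → E) → DGNode E → Prop
  | refl (N : DGNode E) : Reaches D N id N
  | step {l : DGLink E} {σ'' : E → E} {N : DGNode E} :
      l ∈ D.links → Reaches D l.tgt σ'' N → Reaches D l.src (σ'' ∘ l.mor) N

/-- `e` is provided in `N` iff `e ∈ Dom_D(N)` and `e ∉ Dom_D(M)` for every link `M →σ N`. -/
def ProvidedIn (D : DevGraph E) (N : DGNode E) (e : E) : Prop :=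
  e ∈ D.Dom N ∧ ∀ l ∈ D.links, l.tgt = N → e ∉ D.Dom l.src

/-- `e` is locally provided in `N` iff it is provided in `N` and `e ∈ dom^N`. -/
def LocallyProvidedIn (D : DevGraph E) (N : DGNode E) (e : E) : Prop :=
  D.ProvidedIn N e ∧ e ∈ N.localDom

/-- `e` is provided by a link `l : M →σ N` iff `e` is provided but not locally provided
in `N` and `σ(e') = e` for some `e' ∈ Dom_D(M)`. -/
def ProvidedByLink (D : DevGraph E) (l : DGLink E) (e : E) : Prop :=
  l ∈ D.links ∧ D.ProvidedIn l.tgt e ∧ ¬ D.LocallyProvidedIn l.tgt e ∧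
    ∃ e' ∈ D.Dom l.src, l.mor e' = e

/-- `e` is exclusively provided by `l` iff no other link provides `e`. -/
def ExclusivelyProvidedBy (D : DevGraph E) (l : DGLink E) (e : E) : Prop :=
  D.ProvidedByLink l e ∧ ∀ l' ∈ D.links, D.ProvidedByLink l' e → l' = l

/-- A location mapping for `D`: surjective, mapping local entities to their node,
and mapping each entity of `Dom_D` to the unique node providing it. -/
structure IsLocationMapping (D : DevGraph E) (loc : E → DGNode E) : Prop where
  surj : ∀ N ∈ D.nodes, ∃ e ∈ D.DomAll, loc e = N
  local_loc : ∀ N ∈ D.nodes, ∀ e ∈ N.localDom, loc e = N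
  provided : ∀ e ∈ D.DomAll, D.ProvidedIn (loc e) e
  unique : ∀ e ∈ D.DomAll, ∀ N, D.ProvidedIn N e → N = loc e

end DevGraph

/-- The relation `⊏` induced by a support mapping `Supp` on lemmas `Lem`:
`Φ ⊏ φ` iff `Φ ∈ Supp φ`, or `Φ ∈ Supp ψ` and `ψ ⊏ φ` for some lemma `ψ`. -/
inductive SuppBelow {E : Type*} (Supp : E → Set E) (Lem : Set E) : E → E → Prop
  | base {Φ φ : E} : φ ∈ Lem → Φ ∈ Supp φ → SuppBelow Supp Lem Φ φ
  | trans {Φ ψ φ : E} : ψ ∈ Lem → Φ ∈ Supp ψ → SuppBelow Supp Lem ψ φ →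
      SuppBelow Supp Lem Φ φ

/-- `Supp` is a support mapping for axioms `Ax` and lemmas `Lem`: each lemma is
supported by axioms and lemmas, and the induced relation `⊏` is well-founded. -/
structure IsSupportMapping {E : Type*} (Supp : E → Set E) (Ax Lem : Set E) : Prop where
  subset : ∀ φ ∈ Lem, Supp φ ⊆ Ax ∪ Lem
  wf : WellFounded (SuppBelow Supp Lem)

section

variable {E : Type*} (kind : E → EKind)

/-- The global axioms of `N` in `D`. -/
def DevGraph.axiomsOf (D : DevGraph E) (N : DGNode E) : Set E :=
  {e | e ∈ D.Dom N ∧ kind e = EKind.ax}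

/-- The global lemmas of `N` in `D`. -/
def DevGraph.lemmasOf (D : DevGraph E) (N : DGNode E) : Set E :=
  {e | e ∈ D.Dom N ∧ kind e = EKind.lem}

/-- The lemmas occurring in `D`. -/
def DevGraph.lemmasAll (D : DevGraph E) : Set E :=
  {e | e ∈ D.DomAll ∧ kind e = EKind.lem}

/-- `Supp` is a support mapping for the development graph `D`: for every node it is a
support mapping for the global axioms and lemmas of that node. -/
def IsSupportMappingFor (Supp : E → Set E) (D : DevGraph E) : Prop :=
  ∀ N ∈ D.nodes, IsSupportMapping Supp (D.axiomsOf kind N) (D.lemmasOf kind N)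

/-- `(D, loc, Supp)` is a structuring of `(Sig, Ax, Lem)`. -/
structure IsStructuring (D : DevGraph E) (loc : E → DGNode E) (Supp : E → Set E)
    (Sig Ax Lem : Set E) : Prop where
  supp_for : IsSupportMappingFor kind Supp D
  loc_map : D.IsLocationMapping loc
  roots_sig : {e | e ∈ D.DomRoots ∧ kind e = EKind.sig} = Sig
  roots_ax : {e | e ∈ D.DomRoots ∧ kind e = EKind.ax} = Ax
  roots_lem : Lem ⊆ {e | e ∈ D.DomRoots ∧ kind e = EKind.lem}
  supp_reach : ∀ φ ∈ D.lemmasAll kind, ∀ ψ ∈ Supp φ,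
    ∃ σ : E → E, D.Reaches (loc ψ) σ (loc φ) ∧ σ ψ = ψ

end

/-- `P = {N_1, …, N_k}`, `k > 1`, is a partitioning of `N`: the local signatures,
axioms and lemmas of the (distinct) `N_i` partition those of `N` as disjoint unions,
and each `N_i` has a nonempty local domain. -/
structure IsPartitioning {E : Type*} (N : DGNode E) {k : ℕ} (Ns : Fin k → DGNode E) :
    Prop where
  one_lt : 1 < k
  inj : Function.Injective Ns
  sig_eq : N.sig = ⋃ i, (Ns i).sig
  ax_eq : N.ax = ⋃ i, (Ns i).ax
  lem_eq : N.lem = ⋃ i, (Ns i).lem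
  sig_disj : ∀ i j, i ≠ j → Disjoint (Ns i).sig (Ns j).sig
  ax_disj : ∀ i j, i ≠ j → Disjoint (Ns i).ax (Ns j).ax
  lem_disj : ∀ i j, i ≠ j → Disjoint (Ns i).lem (Ns j).lem
  nonempty : ∀ i, (Ns i).localDom.Nonempty

/-- `Ni` (a part of a partitioning of `N`) is lemma independent:
`Supp(ψ) ∩ (ax^N ∪ lem^N) ⊆ ax^{Ni} ∪ lem^{Ni}` for every `ψ ∈ lem^{Ni}`. -/
def LemmaIndependent {E : Type*} (Supp : E → Set E) (N Ni : DGNode E) : Prop :=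
  ∀ ψ ∈ Ni.lem, Supp ψ ∩ (N.ax ∪ N.lem) ⊆ Ni.ax ∪ Ni.lem

/-- The restriction `σ|S` of a signature morphism to a set `S` (identity outside `S`). -/
noncomputable def restrictMor {E : Type*} (σ : E → E) (S : Set E) : E → E :=
  fun e => if e ∈ S then σ e else e

/-- `(D', loc')` is the horizontal split of `(D, loc)` with respect to the node `N` and
the partitioning `N_1, …, N_k`: `N` is replaced by `N_1, …, N_k`, incoming links
`M →θ N` are replaced by `M →θ N_i` for all `i`, outgoing links `N →τ M` by
`N_i →τ|Dom_{D'}(N_i) M` for all `i`, all other links are kept, and `loc'(e) = N_i`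
if `e ∈ dom^{N_i}` and `loc'(e) = loc(e)` otherwise. -/
structure IsHorizontalSplit {E : Type*} (D D' : DevGraph E) (N : DGNode E) {k : ℕ}
    (Ns : Fin k → DGNode E) (loc loc' : E → DGNode E) : Prop where
  mem : N ∈ D.nodes
  fresh : ∀ i, Ns i ∉ D.nodes \ {N}
  nodes' : D'.nodes = Set.range Ns ∪ (D.nodes \ {N})
  links' : D'.links =
    {l | (l ∈ D.links ∧ l.src ≠ N ∧ l.tgt ≠ N)
      ∨ (∃ l0 ∈ D.links, l0.tgt = N ∧ ∃ i, l = ⟨l0.src, l0.mor, Ns i⟩)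
      ∨ (∃ l0 ∈ D.links, l0.src = N ∧
          ∃ i, l = ⟨Ns i, restrictMor l0.mor (D'.Dom (Ns i)), l0.tgt⟩)}
  loc'_in : ∀ i, ∀ e ∈ (Ns i).localDom, loc' e = Ns i
  loc'_out : ∀ e, (∀ i, e ∉ (Ns i).localDom) → loc' e = loc e

/-- `(D', loc')` is the vertical split of `(D, loc)` with respect to the node `N` and
the partitioning `{N_1, N_2}`: `N` is replaced by `N_1` and `N_2` joined by the link
`N_1 →id N_2`, incoming links `M →σ N` are replaced by `M →σ N_1`, outgoing links
`N →σ M` by `N_2 →σ M`, all other links are kept, and `loc'(e) = N_2` if `loc(e) = N`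
and `e ∈ Dom_{D'}(N_2)`, `loc'(e) = N_1` if `loc(e) = N` and `e ∉ Dom_{D'}(N_2)`, and
`loc'(e) = loc(e)` otherwise. -/
structure IsVerticalSplit {E : Type*} (D D' : DevGraph E) (N N1 N2 : DGNode E)
    (loc loc' : E → DGNode E) : Prop where
  mem : N ∈ D.nodes
  fresh1 : N1 ∉ D.nodes \ {N}
  fresh2 : N2 ∉ D.nodes \ {N}
  nodes' : D'.nodes = {N1, N2} ∪ (D.nodes \ {N})
  links' : D'.links =
    {l | (l ∈ D.links ∧ l.src ≠ N ∧ l.tgt ≠ N)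
      ∨ l = ⟨N1, id, N2⟩
      ∨ (∃ l0 ∈ D.links, l0.tgt = N ∧ l = ⟨l0.src, l0.mor, N1⟩)
      ∨ (∃ l0 ∈ D.links, l0.src = N ∧ l = ⟨N2, l0.mor, l0.tgt⟩)}
  loc'_N2 : ∀ e, loc e = N → e ∈ D'.Dom N2 → loc' e = N2
  loc'_N1 : ∀ e, loc e = N → e ∉ D'.Dom N2 → loc' e = N1
  loc'_other : ∀ e, loc e ≠ N → loc' e = loc e

/-- `(D', loc', Supp ∪ SuppN)` is the factorization of `(D, loc, Supp)` with respect to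
the nodes `M_1, …, M_p` (imported via links `K_i →σ_{i,j} M_j` from `K_1, …, K_n`),
the fresh sets `sigN, axN, lemN`, the morphisms `θ_j` and `σ_i`, and the support
mapping `SuppN`; it includes all side conditions of the factorization rule. -/
structure IsFactorization {E : Type*} (kind : E → EKind) (D D' : DevGraph E)
    (loc loc' : E → DGNode E) (Supp SuppN : E → Set E)
    {n p : ℕ} (Ks : Fin n → DGNode E) (Ms : Fin p → DGNode E)
    (σij : Fin n → Fin p → E → E)
    (sigN axN lemN : Set E) (θ : Fin p → E → E) (σ : Fin n → E → E)
    (N : DGNode E) (Nj : Fin p → DGNode E) : Prop where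
  one_lt : 1 < p
  Ks_mem : ∀ i, Ks i ∈ D.nodes
  Ms_mem : ∀ j, Ms j ∈ D.nodes
  Ms_inj : Function.Injective Ms
  Ms_nonempty : ∀ j, ((Ms j).sig ∪ (Ms j).ax).Nonempty
  links_ij : ∀ i j, (⟨Ks i, σij i j, Ms j⟩ : DGLink E) ∈ D.links
  fresh : (sigN ∪ axN ∪ lemN) ∩ D.DomAll = ∅
  kind_sig : ∀ e ∈ sigN, kind e = EKind.sig
  kind_ax : ∀ e ∈ axN, kind e = EKind.ax
  kind_lem : ∀ e ∈ lemN, kind e = EKind.lem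
  mor_compat : ∀ i j, ∀ e ∈ D.Dom (Ks i), θ j (σ i e) = σij i j e
  mor_fresh : ∀ i j, ∀ e ∈ D.Dom (Ks i), σij i j e = e ∨ σij i j e ∉ D.DomAll
  sig_sub : ∀ j, (Ms j).sig ⊆ θ j '' sigN ∧ θ j '' sigN ⊆ D.Dom (Ms j)
  ax_sub : ∀ j, (Ms j).ax ⊆ θ j '' axN ∧ θ j '' axN ⊆ D.Dom (Ms j)
  lem_wit : ∀ e ∈ lemN, ∃ l, θ l e ∈ (Ms l).lem
  lem_inj : ∀ e ∈ lemN, ∀ i j, θ i e = θ j e → i = j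
  lem_loc : ∀ e ∈ lemN, ∀ j, θ j e ∈ D.DomAll → loc (θ j e) = Ms j
  suppN : IsSupportMapping SuppN (axN ∪ ⋃ i, σ i '' D.Dom (Ks i)) lemN
  N_def : N = ⟨sigN, axN, lemN⟩
  Nj_def : ∀ j, Nj j = ⟨∅, ∅, (Ms j).lem \ θ j '' lemN⟩
  nodes' : D'.nodes = {N} ∪ Set.range Nj ∪ (D.nodes \ Set.range Ms)
  links' : D'.links =
    {l | (l ∈ D.links ∧ l.src ∉ Set.range Ms ∧ l.tgt ∉ Set.range Ms)
      ∨ (∃ i, l = ⟨Ks i, σ i, N⟩)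
      ∨ (∃ j, l = ⟨N, θ j, Nj j⟩)
      ∨ (∃ l0 ∈ D.links, ∃ j, l0.tgt = Ms j ∧
          (∀ i, l0.src ≠ Ks i ∨ l0.mor ≠ σij i j) ∧ l = ⟨l0.src, l0.mor, Nj j⟩)
      ∨ (∃ l0 ∈ D.links, ∃ j, l0.src = Ms j ∧ l = ⟨Nj j, l0.mor, l0.tgt⟩)}
  loc'_N : ∀ x, x ∈ D'.Dom N → (∀ i, x ∉ D'.Dom (Ks i)) → loc' x = N
  loc'_Nj : ∀ x j, ¬ (x ∈ D'.Dom N ∧ ∀ i, x ∉ D'.Dom (Ks i)) →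
      x ∈ D'.Dom (Nj j) → (∀ l ∈ D'.links, l.tgt = Nj j → x ∉ D'.Dom l.src) →
      loc' x = Nj j
  loc'_other : ∀ x, ¬ (x ∈ D'.Dom N ∧ ∀ i, x ∉ D'.Dom (Ks i)) →
      (∀ j, ¬ (x ∈ D'.Dom (Nj j) ∧ ∀ l ∈ D'.links, l.tgt = Nj j → x ∉ D'.Dom l.src)) →
      loc' x = loc x

/-- The link `l` is removable from the structuring `(D, loc, Supp)`, and
`D' = ⟨N, L \ {l}⟩` is the corresponding reduction. -/
structure IsRemovableLink {E : Type*} (kind : E → EKind) (D D' : DevGraph E)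
    (loc : E → DGNode E) (Supp : E → Set E) (l : DGLink E) : Prop where
  mem : l ∈ D.links
  nodes' : D'.nodes = D.nodes
  links' : D'.links = D.links \ {l}
  cond1 : ∀ l' ∈ D.links, ∀ e ∈ D.Dom l'.src, D.ExclusivelyProvidedBy l' (l'.mor e) →
      l'.mor e ∈ D'.Dom l'.tgt ∧ l ≠ l'
  cond2 : ∀ e ∈ D.DomAll, ∀ M, D.IsRoot M → ∀ σ : E → E, D.Reaches (loc e) σ M →
      ∃ M', D'.IsRoot M' ∧ D'.Reaches (loc e) σ M'
  cond3_supp : ∀ φ ∈ D.lemmasAll kind, Supp φ ⊆ D'.Dom (loc φ)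
  cond3_sig : ∀ N' ∈ D.nodes, N'.sig ⊆ D'.Dom N'

/-! Adding a link `K →σ N` that is already realised by a path `K →*σ N` changes neither the
domains nor the reachability relation, since every use of the new link can be replaced by
the path. It does not create new roots either, because acyclicity forces `K ≠ N`, so `K`
already had an outgoing link. The only delicate point is that entities provided in `N`
stay provided there: if such an `e` lay in `Dom(K)`, it would be provided in some node
`P` with `P →* K`; uniqueness of providers gives `P = N`, and the new link closes the
cycle `N →* K → N`. -/

namespace DevGraph

variable {E : Type*}

def LinkRel (D : DevGraph E) (M K : DGNode E) : Prop :=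
  ∃ l ∈ D.links, l.src = M ∧ l.tgt = K

lemma LinkRel.of_mem {D : DevGraph E} {l : DGLink E} (hl : l ∈ D.links) :
    D.LinkRel l.src l.tgt :=
  ⟨l, hl, rfl, rfl⟩

lemma LinkRel.mono {D D' : DevGraph E} (hsub : D.links ⊆ D'.links) {M K : DGNode E}
    (h : D.LinkRel M K) : D'.LinkRel M K :=
  let ⟨l, hl, hsrc, htgt⟩ := h
  ⟨l, hsub hl, hsrc, htgt⟩

lemma wellFoundedOn_transGen_linkRel (D : DevGraph E) :
    D.nodes.WellFoundedOn (Relation.TransGen D.LinkRel) :=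
  haveI : IsStrictOrder _ (Relation.TransGen D.LinkRel) :=
    { irrefl := D.acyclic, trans := fun _ _ _ => Relation.TransGen.trans }
  D.finite_nodes.wellFoundedOn

lemma mem_nodes_of_inDom {D : DevGraph E} {M : DGNode E} {e : E} (h : D.InDom M e) :
    M ∈ D.nodes := by
  cases h with
  | loc hM _ => exact hM
  | link hl _ => exact D.tgt_mem _ hl

lemma exists_providedIn_of_inDom {D : DevGraph E} {M : DGNode E} {e : E}
    (h : D.InDom M e) : ∃ P, D.ProvidedIn P e ∧ Relation.ReflTransGen D.LinkRel P M := by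
  refine D.wellFoundedOn_transGen_linkRel.induction (mem_nodes_of_inDom h)
    (P := fun M => D.InDom M e → ∃ P, D.ProvidedIn P e ∧ Relation.ReflTransGen D.LinkRel P M)
    ?_ h
  intro M _ ih hM
  by_cases hprov : D.ProvidedIn M e
  · exact ⟨M, hprov, .refl⟩
  · obtain ⟨l, hl, rfl, he⟩ : ∃ l ∈ D.links, l.tgt = M ∧ e ∈ D.Dom l.src := by
      by_contra! hnone
      exact hprov ⟨hM, hnone⟩
    obtain ⟨P, hP, hPsrc⟩ :=
      ih l.src (D.src_mem l hl) (.single (LinkRel.of_mem hl)) he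
    exact ⟨P, hP, hPsrc.tail (LinkRel.of_mem hl)⟩

namespace Reaches

variable {D : DevGraph E}

lemma single {l : DGLink E} (hl : l ∈ D.links) : D.Reaches l.src l.mor l.tgt :=
  .step hl (.refl _)

lemma trans {A B C : DGNode E} {σ₁ σ₂ : E → E} (h₁ : D.Reaches A σ₁ B)
    (h₂ : D.Reaches B σ₂ C) : D.Reaches A (σ₂ ∘ σ₁) C := by
  induction h₁ with
  | refl => exact h₂
  | step hl _ ih => exact Function.comp_assoc .. ▸ .step hl (ih h₂)

lemma mono {D' : DevGraph E} (hsub : D.links ⊆ D'.links) {M P : DGNode E} {τ : E → E}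
    (h : D.Reaches M τ P) : D'.Reaches M τ P := by
  induction h with
  | refl => exact .refl _
  | step hl _ ih => exact .step (hsub hl) ih

lemma inDom {M N : DGNode E} {τ : E → E} (h : D.Reaches M τ N) {e : E}
    (he : D.InDom M e) : D.InDom N (τ e) := by
  induction h generalizing e with
  | refl => exact he
  | step hl _ ih => exact ih (.link hl he)

lemma exists_link_src_of_ne {M N : DGNode E} {τ : E → E} (h : D.Reaches M τ N)
    (hne : M ≠ N) : ∃ l ∈ D.links, l.src = M := by
  cases h with
  | refl => exact absurd rfl hne
  | step hl _ => exact ⟨_, hl, rfl⟩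

end Reaches

structure IsTransitiveEnrichment (D D' : DevGraph E) : Prop where
  nodes_eq : D'.nodes = D.nodes
  links_subset : D.links ⊆ D'.links
  reaches : ∀ l ∈ D'.links, D.Reaches l.src l.mor l.tgt

lemma isTransitiveEnrichment_insert_link {D D' : DevGraph E} {K N : DGNode E}
    {σ : E → E} (hreach : D.Reaches K σ N) (hnodes : D'.nodes = D.nodes)
    (hlinks : D'.links = D.links ∪ {(⟨K, σ, N⟩ : DGLink E)}) :
    D.IsTransitiveEnrichment D' where
  nodes_eq := hnodes
  links_subset := hlinks ▸ Set.subset_union_left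
  reaches l hl := by
    rw [hlinks] at hl
    rcases hl with hl | rfl
    · exact .single hl
    · exact hreach

namespace IsTransitiveEnrichment

variable {D D' : DevGraph E} (h : D.IsTransitiveEnrichment D')
include h

lemma reaches_iff {M P : DGNode E} {τ : E → E} : D'.Reaches M τ P ↔ D.Reaches M τ P := by
  refine ⟨fun h' => ?_, Reaches.mono h.links_subset⟩
  induction h' with
  | refl => exact .refl _
  | step hl _ ih => exact (h.reaches _ hl).trans ih

lemma inDom_iff {M : DGNode E} {e : E} : D'.InDom M e ↔ D.InDom M e := by
  constructor
  · intro h'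
    induction h' with
    | loc hM he => exact .loc (h.nodes_eq ▸ hM) he
    | link hl _ ih => exact (h.reaches _ hl).inDom ih
  · intro h'
    induction h' with
    | loc hM he => exact .loc (h.nodes_eq ▸ hM) he
    | link hl _ ih => exact .link (h.links_subset hl) ih

lemma dom_eq : D'.Dom = D.Dom :=
  funext fun _ => Set.ext fun _ => h.inDom_iff

lemma domAll_eq : D'.DomAll = D.DomAll := by
  simp only [DomAll, h.dom_eq, h.nodes_eq]

lemma isRoot_iff {M : DGNode E} : D'.IsRoot M ↔ D.IsRoot M := by
  refine ⟨fun ⟨hM, hout⟩ => ⟨h.nodes_eq ▸ hM, fun l hl => hout l (h.links_subset hl)⟩, ?_⟩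
  rintro ⟨hM, hout⟩
  refine ⟨h.nodes_eq ▸ hM, fun l hl hsrc => ?_⟩
  have hne : l.src ≠ l.tgt := fun heq => D'.acyclic _ (.single ⟨l, hl, rfl, heq.symm⟩)
  obtain ⟨l₀, hl₀, hsrc₀⟩ := (h.reaches l hl).exists_link_src_of_ne hne
  exact hout l₀ hl₀ (hsrc₀.trans hsrc)

lemma domRoots_eq : D'.DomRoots = D.DomRoots := by
  simp only [DomRoots, h.isRoot_iff, h.dom_eq]

lemma providedIn_of_providedIn {M : DGNode E} {e : E} (h' : D'.ProvidedIn M e) :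
    D.ProvidedIn M e := by
  rw [ProvidedIn, ← h.dom_eq]
  exact ⟨h'.1, fun l hl => h'.2 l (h.links_subset hl)⟩

lemma providedIn_loc {loc : E → DGNode E} (hloc : D.IsLocationMapping loc) {e : E}
    (he : e ∈ D.DomAll) : D'.ProvidedIn (loc e) e := by
  obtain ⟨heloc, hnot⟩ := hloc.provided e he
  refine ⟨h.dom_eq ▸ heloc, fun l hl htgt hesrc => ?_⟩
  rw [h.dom_eq] at hesrc
  obtain ⟨P, hP, hPsrc⟩ := exists_providedIn_of_inDom hesrc
  have hPloc : P = loc e := hloc.unique e he P hP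
  have hcycle : Relation.TransGen D'.LinkRel P l.tgt :=
    .tail' (Relation.ReflTransGen.mono (fun _ _ => LinkRel.mono h.links_subset) _ _ hPsrc)
      (LinkRel.of_mem hl)
  exact D'.acyclic P (htgt.trans hPloc.symm ▸ hcycle)

lemma isLocationMapping {loc : E → DGNode E} (hloc : D.IsLocationMapping loc) :
    D'.IsLocationMapping loc where
  surj M hM := h.domAll_eq ▸ hloc.surj M (h.nodes_eq ▸ hM)
  local_loc M hM := hloc.local_loc M (h.nodes_eq ▸ hM)
  provided _ he := h.providedIn_loc hloc (h.domAll_eq ▸ he)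
  unique e he M hM := hloc.unique e (h.domAll_eq ▸ he) M (h.providedIn_of_providedIn hM)

lemma isStructuring {kind : E → EKind} {loc : E → DGNode E} {Supp : E → Set E}
    {Sig Ax Lem : Set E} (hS : IsStructuring kind D loc Supp Sig Ax Lem) :
    IsStructuring kind D' loc Supp Sig Ax Lem where
  supp_for M hM := by
    simpa only [axiomsOf, lemmasOf, h.dom_eq] using hS.supp_for M (h.nodes_eq ▸ hM)
  loc_map := h.isLocationMapping hS.loc_map
  roots_sig := h.domRoots_eq ▸ hS.roots_sig
  roots_ax := h.domRoots_eq ▸ hS.roots_ax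
  roots_lem := h.domRoots_eq ▸ hS.roots_lem
  supp_reach φ hφ ψ hψ := by
    rw [lemmasAll, h.domAll_eq] at hφ
    simpa only [h.reaches_iff] using hS.supp_reach φ hφ ψ hψ

end IsTransitiveEnrichment

end DevGraph

/-- The transitive enrichment of a structuring is again a structuring. -/
theorem transitive_enrichment_is_structuring {E : Type*} (kind : E → EKind)
    (D D' : DevGraph E) (loc : E → DGNode E) (Supp : E → Set E)
    (Sig Ax Lem : Set E) (K N : DGNode E) (σ : E → E)
    (hS : IsStructuring kind D loc Supp Sig Ax Lem)
    (hreach : D.Reaches K σ N)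
    (hnodes : D'.nodes = D.nodes)
    (hlinks : D'.links = D.links ∪ {(⟨K, σ, N⟩ : DGLink E)}) :
    IsStructuring kind D' loc Supp Sig Ax Lem :=
  (DevGraph.isTransitiveEnrichment_insert_link hreach hnodes hlinks).isStructuring hS
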